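/- Let (Θ, Θ̄) be a twist for a weak Hopf algebra H over a field k and let x ∈ H be an invertible element with ε_t(x) = 1 and ε_s(x) = 1. Then the pair (Θˣ, Θ̄ˣ), where Θˣ = Δ(x⁻¹)Θ(x⊗x) and Θ̄ˣ = (x⁻¹⊗x⁻¹)Θ̄Δ(x), is also a twist for H; moreover the map h ↦ x⁻¹hx is an isomorphism of weak Hopf algebras from H_Θ to H_{Θˣ}, i.e. it is an algebra automorphism of H which intertwines the twisted comultiplications Δ_Θ(h)=Θ̄Δ(h)Θ and Δ_{Θˣ}(h)=Θ̄ˣΔ(h)Θˣ, preserves ε, and intertwines the twisted antipodes S_Θ(h)=v⁻¹S(h)v (v = S(Θ⁽¹⁾)Θ⁽²⁾) and S_{Θˣ}. -/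

import Mathlib

open TensorProduct

noncomputable section

namespace WHA

variable (k B : Type*) [Field k] [Ring B] [Algebra k B]

/-- `x ↦ x ⊗ 1`, the embedding of `B ⊗ B` into legs 1,2 of `B ⊗ B ⊗ B`. -/
def leg12 : B ⊗[k] B →ₗ[k] B ⊗[k] (B ⊗[k] B) :=
  (TensorProduct.assoc k B B B).toLinearMap ∘ₗ (TensorProduct.mk k (B ⊗[k] B) B).flip 1

/-- `x ↦ 1 ⊗ x`, the embedding of `B ⊗ B` into legs 2,3 of `B ⊗ B ⊗ B`. -/
def leg23 : B ⊗[k] B →ₗ[k] B ⊗[k] (B ⊗[k] B) :=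
  TensorProduct.mk k B (B ⊗[k] B) 1

/-- `a ⊗ b ↦ a ⊗ 1 ⊗ b`, the embedding of `B ⊗ B` into legs 1,3 of `B ⊗ B ⊗ B`. -/
def leg13 : B ⊗[k] B →ₗ[k] B ⊗[k] (B ⊗[k] B) :=
  TensorProduct.map LinearMap.id (TensorProduct.mk k B B 1)

/-- `Δ ⊗ id`, landing in the right-associated triple tensor product. -/
def ext12 (Δ : B →ₗ[k] B ⊗[k] B) : B ⊗[k] B →ₗ[k] B ⊗[k] (B ⊗[k] B) :=
  (TensorProduct.assoc k B B B).toLinearMap ∘ₗ TensorProduct.map Δ LinearMap.id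

/-- `id ⊗ Δ`. -/
def ext23 (Δ : B →ₗ[k] B ⊗[k] B) : B ⊗[k] B →ₗ[k] B ⊗[k] (B ⊗[k] B) :=
  TensorProduct.map LinearMap.id Δ

/-- `(ε ⊗ id)` composed with the canonical isomorphism `k ⊗ B ≅ B`. -/
def epsL (ε : B →ₗ[k] k) : B ⊗[k] B →ₗ[k] B :=
  (TensorProduct.lid k B).toLinearMap ∘ₗ TensorProduct.map ε LinearMap.id

/-- `(id ⊗ ε)` composed with the canonical isomorphism `B ⊗ k ≅ B`. -/
def epsR (ε : B →ₗ[k] k) : B ⊗[k] B →ₗ[k] B :=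
  (TensorProduct.rid k B).toLinearMap ∘ₗ TensorProduct.map LinearMap.id ε

/-- Pairing of two linear functionals against an element of `B ⊗ B`. -/
def pairF (φ ψ : B →ₗ[k] k) : B ⊗[k] B →ₗ[k] k :=
  (TensorProduct.lid k k).toLinearMap ∘ₗ TensorProduct.map φ ψ

/-- The multiplication map `B ⊗ B → B`. -/
def mul2 : B ⊗[k] B →ₗ[k] B := LinearMap.mul' k B

/-- A weak Hopf algebra structure on the `k`-algebra `B`. -/
structure WeakHopf where
  Δ : B →ₗ[k] B ⊗[k] B
  ε : B →ₗ[k] k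
  S : B →ₗ[k] B
  comul_mul : ∀ g h : B, Δ (g * h) = Δ g * Δ h
  coassoc : ∀ h : B, ext12 k B Δ (Δ h) = ext23 k B Δ (Δ h)
  counit_left : ∀ h : B, epsL k B ε (Δ h) = h
  counit_right : ∀ h : B, epsR k B ε (Δ h) = h
  eps_weak₁ : ∀ g h f : B, ε (g * h * f) =
    pairF k B (ε ∘ₗ LinearMap.mulLeft k g) (ε ∘ₗ LinearMap.mulRight k f) (Δ h)
  eps_weak₂ : ∀ g h f : B, ε (g * h * f) =
    pairF k B (ε ∘ₗ LinearMap.mulRight k f) (ε ∘ₗ LinearMap.mulLeft k g) (Δ h)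
  delta_one₁ : ext12 k B Δ (Δ 1) = leg12 k B (Δ 1) * leg23 k B (Δ 1)
  delta_one₂ : ext12 k B Δ (Δ 1) = leg23 k B (Δ 1) * leg12 k B (Δ 1)
  antipode₁ : ∀ h : B,
    mul2 k B (TensorProduct.map LinearMap.id S (Δ h)) = epsL k B ε (Δ 1 * (h ⊗ₜ[k] 1))
  antipode₂ : ∀ h : B,
    mul2 k B (TensorProduct.map S LinearMap.id (Δ h)) = epsR k B ε (((1 : B) ⊗ₜ[k] h) * Δ 1)
  antipode₃ : ∀ h : B,
    mul2 k B (TensorProduct.map S (mul2 k B ∘ₗ TensorProduct.map LinearMap.id S)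
      (ext23 k B Δ (Δ h))) = S h

variable {k B}

/-- The target counital map `ε_t`. -/
def WeakHopf.εt (W : WeakHopf k B) : B →ₗ[k] B :=
  epsL k B W.ε ∘ₗ LinearMap.mulLeft k (W.Δ 1) ∘ₗ (TensorProduct.mk k B B).flip 1

/-- The source counital map `ε_s`. -/
def WeakHopf.εs (W : WeakHopf k B) : B →ₗ[k] B :=
  epsR k B W.ε ∘ₗ LinearMap.mulRight k (W.Δ 1) ∘ₗ TensorProduct.mk k B B 1

variable (k B)

/-- A twist for a weak Hopf algebra. -/
structure Twist (W : WeakHopf k B) where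
  Θ : B ⊗[k] B
  Θbar : B ⊗[k] B
  idem_left : Θ = W.Δ 1 * Θ
  idem_right : Θbar = Θbar * W.Δ 1
  prod_eq : Θ * Θbar = W.Δ 1
  counit₁ : epsL k B W.ε Θ = 1
  counit₂ : epsR k B W.ε Θ = 1
  counit₃ : epsL k B W.ε Θbar = 1
  counit₄ : epsR k B W.ε Θbar = 1
  cocycle₁ : ext12 k B W.Δ Θ * leg12 k B Θ = ext23 k B W.Δ Θ * leg23 k B Θ
  cocycle₂ : leg12 k B Θbar * ext12 k B W.Δ Θbar = leg23 k B Θbar * ext23 k B W.Δ Θbar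
  cocycle₃ : ext12 k B W.Δ Θbar * ext23 k B W.Δ Θ = leg12 k B Θ * leg23 k B Θbar
  cocycle₄ : ext23 k B W.Δ Θbar * ext12 k B W.Δ Θ = leg23 k B Θ * leg12 k B Θbar

end WHA

namespace WHA

/-- Conjugation `h ↦ xi * h * x` as a linear map. -/
def conj (k : Type*) {B : Type*} [Field k] [Ring B] [Algebra k B] (xi x : B) : B →ₗ[k] B :=
  LinearMap.mulLeft k xi ∘ₗ LinearMap.mulRight k x

end WHA

/-!
Conjugation by `x` moves every twist axiom for `(Θˣ, Θ̄ˣ)` back to the same axiom for `(Θ, Θ̄)`: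
the products `Δ(x)Δ(x⁻¹) = Δ(1)` are absorbed by `Θ = Δ(1)Θ` and `Θ̄ = Θ̄Δ(1)`, coassociativity
moves `Δ(x⁻¹)` and `Δ(x)` between the two ways of comultiplying a leg, and `x` is invisible to the
counit because `ε(m x) = ε(m ε_t(x))` and `ε(x⁻¹ m) = ε(ε_s(x⁻¹) m)`, where
`ε_s(x⁻¹) = ε_s(ε_s(x) x⁻¹) = 1`.

For the antipodes one needs `S(ab) = S(b)S(a)`. In the convolution algebra of linear maps
`B ⊗ B → B`, `S ∘ m` is a left and `a ⊗ b ↦ S(b)S(a)` a right inverse of the multiplication `m`,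
up to the idempotents `ε_s ∘ m` and `ε_t ∘ m` which they absorb, so associativity of convolution
forces them to agree.
-/

namespace WHA

section Tensor

variable {R A C D E : Type*} [CommSemiring R] [Semiring A] [Semiring C] [Semiring D]
  [Semiring E] [Algebra R A] [Algebra R C] [Algebra R D] [Algebra R E]

theorem map_mul_of_map_mul (f : A →ₗ[R] C) (g : D →ₗ[R] E)
    (hf : ∀ a b, f (a * b) = f a * f b) (hg : ∀ a b, g (a * b) = g a * g b)
    (u v : A ⊗[R] D) :
    TensorProduct.map f g (u * v) = TensorProduct.map f g u * TensorProduct.map f g v := by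
  refine (LinearMap.map_mul_iff _).mpr ?_ u v
  ext a b c d
  simp [hf, hg]

end Tensor

variable {k B : Type*} [Field k] [Ring B] [Algebra k B]

@[simp] lemma mul2_tmul (a b : B) : mul2 k B (a ⊗ₜ[k] b) = a * b := rfl

@[simp] lemma epsL_tmul (φ : B →ₗ[k] k) (a b : B) : epsL k B φ (a ⊗ₜ[k] b) = φ a • b := rfl

@[simp] lemma epsR_tmul (φ : B →ₗ[k] k) (a b : B) : epsR k B φ (a ⊗ₜ[k] b) = φ b • a := rfl

@[simp] lemma pairF_tmul (φ ψ : B →ₗ[k] k) (a b : B) :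
    pairF k B φ ψ (a ⊗ₜ[k] b) = φ a * ψ b := by
  simp [pairF]

@[simp] lemma leg12_tmul (a b : B) : leg12 k B (a ⊗ₜ[k] b) = a ⊗ₜ[k] (b ⊗ₜ[k] (1 : B)) := rfl

@[simp] lemma leg23_apply (u : B ⊗[k] B) : leg23 k B u = (1 : B) ⊗ₜ[k] u := rfl

@[simp] lemma ext12_tmul (D : B →ₗ[k] B ⊗[k] B) (a b : B) :
    ext12 k B D (a ⊗ₜ[k] b) = TensorProduct.assoc k B B B (D a ⊗ₜ[k] b) := rfl

@[simp] lemma ext23_tmul (D : B →ₗ[k] B ⊗[k] B) (a b : B) :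
    ext23 k B D (a ⊗ₜ[k] b) = a ⊗ₜ[k] D b := rfl

lemma leg12_mul (u v : B ⊗[k] B) : leg12 k B (u * v) = leg12 k B u * leg12 k B v :=
  map_mul ((Algebra.TensorProduct.assoc k k k B B B).toAlgHom.comp
    Algebra.TensorProduct.includeLeft) u v

lemma leg23_mul (u v : B ⊗[k] B) : leg23 k B (u * v) = leg23 k B u * leg23 k B v :=
  map_mul (Algebra.TensorProduct.includeRight (R := k) (A := B)) u v

lemma commute_one_tmul_one_tmul_leg12 (c : B) (u : B ⊗[k] B) :
    Commute ((1 : B) ⊗ₜ[k] ((1 : B) ⊗ₜ[k] c)) (leg12 k B u) := by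
  induction u using TensorProduct.induction_on with
  | zero => simp
  | tmul a b => simp [Commute, SemiconjBy]
  | add u v hu hv => rw [map_add]; exact hu.add_right hv

lemma commute_tmul_one_leg23 (c : B) (u : B ⊗[k] B) :
    Commute (c ⊗ₜ[k] (1 : B ⊗[k] B)) (leg23 k B u) := by
  simp [Commute, SemiconjBy]

lemma epsL_one_tmul_mul (φ : B →ₗ[k] k) (c : B) (u : B ⊗[k] B) :
    epsL k B φ (((1 : B) ⊗ₜ[k] c) * u) = c * epsL k B φ u := by
  induction u using TensorProduct.induction_on with
  | zero => simp
  | tmul p q => simp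
  | add u v hu hv => rw [mul_add, map_add, map_add, hu, hv, mul_add]

lemma epsL_mul_one_tmul (φ : B →ₗ[k] k) (c : B) (u : B ⊗[k] B) :
    epsL k B φ (u * ((1 : B) ⊗ₜ[k] c)) = epsL k B φ u * c := by
  induction u using TensorProduct.induction_on with
  | zero => simp
  | tmul p q => simp
  | add u v hu hv => rw [add_mul, map_add, map_add, hu, hv, add_mul]

lemma epsR_tmul_one_mul (φ : B →ₗ[k] k) (c : B) (u : B ⊗[k] B) :
    epsR k B φ ((c ⊗ₜ[k] (1 : B)) * u) = c * epsR k B φ u := by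
  induction u using TensorProduct.induction_on with
  | zero => simp
  | tmul p q => simp
  | add u v hu hv => rw [mul_add, map_add, map_add, hu, hv, mul_add]

lemma epsR_mul_tmul_one (φ : B →ₗ[k] k) (c : B) (u : B ⊗[k] B) :
    epsR k B φ (u * (c ⊗ₜ[k] (1 : B))) = epsR k B φ u * c := by
  induction u using TensorProduct.induction_on with
  | zero => simp
  | tmul p q => simp
  | add u v hu hv => rw [add_mul, map_add, map_add, hu, hv, add_mul]

lemma apply_epsL (g φ : B →ₗ[k] k) (u : B ⊗[k] B) : g (epsL k B φ u) = pairF k B φ g u := by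
  induction u using TensorProduct.induction_on with
  | zero => simp
  | tmul p q => simp
  | add u v hu hv => rw [map_add, map_add, map_add, hu, hv]

lemma apply_epsR (g φ : B →ₗ[k] k) (u : B ⊗[k] B) : g (epsR k B φ u) = pairF k B g φ u := by
  induction u using TensorProduct.induction_on with
  | zero => simp
  | tmul p q => simp [mul_comm]
  | add u v hu hv => rw [map_add, map_add, map_add, hu, hv]

lemma pairF_one_tmul_mul (φ ψ : B →ₗ[k] k) (a : B) (u : B ⊗[k] B) :
    pairF k B φ ψ (((1 : B) ⊗ₜ[k] a) * u) = pairF k B φ (ψ ∘ₗ LinearMap.mulLeft k a) u := by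
  induction u using TensorProduct.induction_on with
  | zero => simp
  | tmul p q => simp
  | add u v hu hv => rw [mul_add, map_add, map_add, hu, hv]

lemma pairF_tmul_one_mul (φ ψ : B →ₗ[k] k) (a : B) (u : B ⊗[k] B) :
    pairF k B φ ψ ((a ⊗ₜ[k] (1 : B)) * u) = pairF k B (φ ∘ₗ LinearMap.mulLeft k a) ψ u := by
  induction u using TensorProduct.induction_on with
  | zero => simp
  | tmul p q => simp
  | add u v hu hv => rw [mul_add, map_add, map_add, hu, hv]

lemma pairF_mul_one_tmul (φ ψ : B →ₗ[k] k) (a : B) (u : B ⊗[k] B) :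
    pairF k B φ ψ (u * ((1 : B) ⊗ₜ[k] a)) = pairF k B φ (ψ ∘ₗ LinearMap.mulRight k a) u := by
  induction u using TensorProduct.induction_on with
  | zero => simp
  | tmul p q => simp
  | add u v hu hv => rw [add_mul, map_add, map_add, hu, hv]

lemma pairF_mul_tmul_one (φ ψ : B →ₗ[k] k) (a : B) (u : B ⊗[k] B) :
    pairF k B φ ψ (u * (a ⊗ₜ[k] (1 : B))) = pairF k B (φ ∘ₗ LinearMap.mulRight k a) ψ u := by
  induction u using TensorProduct.induction_on with
  | zero => simp
  | tmul p q => simp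
  | add u v hu hv => rw [add_mul, map_add, map_add, hu, hv]

lemma map_one_tmul_mul (f g : B →ₗ[k] B) (c : B) (u : B ⊗[k] B) :
    TensorProduct.map f g (((1 : B) ⊗ₜ[k] c) * u)
      = TensorProduct.map f (g ∘ₗ LinearMap.mulLeft k c) u := by
  induction u using TensorProduct.induction_on with
  | zero => simp
  | tmul p q => simp
  | add u v hu hv => rw [mul_add, map_add, map_add, hu, hv]

lemma map_conj_conj (xi x : B) (u : B ⊗[k] B) :
    TensorProduct.map (conj k xi x) (conj k xi x) u = (xi ⊗ₜ[k] xi) * u * (x ⊗ₜ[k] x) := by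
  induction u using TensorProduct.induction_on with
  | zero => simp
  | tmul p q => simp [conj, mul_assoc]
  | add u v hu hv => simp only [map_add, mul_add, add_mul, hu, hv]

section WeakBialgebra

variable (W : WeakHopf k B)

lemma comul_one_mul (a : B) : W.Δ 1 * W.Δ a = W.Δ a := by
  rw [← W.comul_mul, one_mul]

lemma comul_mul_comul_one (a : B) : W.Δ a * W.Δ 1 = W.Δ a := by
  rw [← W.comul_mul, mul_one]

lemma ext12_mul (u v : B ⊗[k] B) :
    ext12 k B W.Δ (u * v) = ext12 k B W.Δ u * ext12 k B W.Δ v := by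
  simp only [ext12, LinearMap.coe_comp, LinearEquiv.coe_coe, Function.comp_apply,
    map_mul_of_map_mul W.Δ LinearMap.id W.comul_mul (fun _ _ => rfl)]
  exact map_mul (Algebra.TensorProduct.assoc k k k B B B) _ _

lemma ext23_mul (u v : B ⊗[k] B) :
    ext23 k B W.Δ (u * v) = ext23 k B W.Δ u * ext23 k B W.Δ v :=
  map_mul_of_map_mul LinearMap.id W.Δ (fun _ _ => rfl) W.comul_mul u v

lemma ext12_tmul_eq_leg12_mul (c d : B) :
    ext12 k B W.Δ (c ⊗ₜ[k] d) = leg12 k B (W.Δ c) * ((1 : B) ⊗ₜ[k] ((1 : B) ⊗ₜ[k] d)) := by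
  rw [ext12_tmul]
  induction W.Δ c using TensorProduct.induction_on with
  | zero => simp
  | tmul a b => simp
  | add u v hu hv => rw [TensorProduct.add_tmul, map_add, hu, hv, map_add, add_mul]

lemma ext23_tmul_eq_mul_leg23 (c d : B) :
    ext23 k B W.Δ (c ⊗ₜ[k] d) = (c ⊗ₜ[k] (1 : B ⊗[k] B)) * leg23 k B (W.Δ d) := by
  simp

lemma εt_apply (h : B) : W.εt h = epsL k B W.ε (W.Δ 1 * (h ⊗ₜ[k] (1 : B))) := rfl

lemma εs_apply (h : B) : W.εs h = epsR k B W.ε (((1 : B) ⊗ₜ[k] h) * W.Δ 1) := rfl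

lemma εt_eq_epsL (z : B) : W.εt z = epsL k B (W.ε ∘ₗ LinearMap.mulRight k z) (W.Δ 1) := by
  rw [εt_apply]
  induction W.Δ 1 using TensorProduct.induction_on with
  | zero => simp
  | tmul p q => simp
  | add u v hu hv => rw [add_mul, map_add, map_add, hu, hv]

lemma εs_eq_epsR (c : B) : W.εs c = epsR k B (W.ε ∘ₗ LinearMap.mulLeft k c) (W.Δ 1) := by
  rw [εs_apply]
  induction W.Δ 1 using TensorProduct.induction_on with
  | zero => simp
  | tmul p q => simp
  | add u v hu hv => rw [mul_add, map_add, map_add, hu, hv]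

def WeakHopf.εt' : B →ₗ[k] B :=
  epsL k B W.ε ∘ₗ LinearMap.mulRight k (W.Δ 1) ∘ₗ (TensorProduct.mk k B B).flip 1

def WeakHopf.εs' : B →ₗ[k] B :=
  epsR k B W.ε ∘ₗ LinearMap.mulLeft k (W.Δ 1) ∘ₗ TensorProduct.mk k B B 1

lemma εt'_apply (h : B) : W.εt' h = epsL k B W.ε ((h ⊗ₜ[k] (1 : B)) * W.Δ 1) := rfl

lemma εs'_apply (h : B) : W.εs' h = epsR k B W.ε (W.Δ 1 * ((1 : B) ⊗ₜ[k] h)) := rfl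

def counitMid : B ⊗[k] (B ⊗[k] B) →ₗ[k] B ⊗[k] B :=
  TensorProduct.map LinearMap.id (epsL k B W.ε)

@[simp] lemma counitMid_tmul (a : B) (u : B ⊗[k] B) :
    counitMid W (a ⊗ₜ[k] u) = a ⊗ₜ[k] epsL k B W.ε u := rfl

lemma counitMid_ext23 (u : B ⊗[k] B) : counitMid W (ext23 k B W.Δ u) = u := by
  induction u using TensorProduct.induction_on with
  | zero => simp
  | tmul a b => simp [W.counit_left]
  | add u v hu hv => rw [map_add, map_add, hu, hv]

lemma counitMid_assoc_tmul (u : B ⊗[k] B) (d : B) :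
    counitMid W (TensorProduct.assoc k B B B (u ⊗ₜ[k] d)) = epsR k B W.ε u ⊗ₜ[k] d := by
  induction u using TensorProduct.induction_on with
  | zero => simp
  | tmul p q => simp [TensorProduct.smul_tmul']
  | add u v hu hv => rw [TensorProduct.add_tmul, map_add, map_add, hu, hv, map_add,
      TensorProduct.add_tmul]

lemma counitMid_ext12 (u : B ⊗[k] B) : counitMid W (ext12 k B W.Δ u) = u := by
  induction u using TensorProduct.induction_on with
  | zero => simp
  | tmul a b => rw [ext12_tmul, counitMid_assoc_tmul, W.counit_right]
  | add u v hu hv => rw [map_add, map_add, hu, hv]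

lemma leg23_comul_one_mul_leg12_comul (h : B) :
    leg23 k B (W.Δ 1) * leg12 k B (W.Δ h) = ext12 k B W.Δ (W.Δ 1 * (h ⊗ₜ[k] (1 : B))) := by
  rw [← comul_one_mul W h, leg12_mul, ← mul_assoc, ← W.delta_one₂, ext12_mul]
  rfl

lemma leg12_comul_mul_leg23_comul_one (h : B) :
    leg12 k B (W.Δ h) * leg23 k B (W.Δ 1) = ext12 k B W.Δ ((h ⊗ₜ[k] (1 : B)) * W.Δ 1) := by
  rw [← comul_mul_comul_one W h, leg12_mul, mul_assoc, ← W.delta_one₁, ext12_mul]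
  rfl

lemma leg12_comul_one_mul_leg23_comul (h : B) :
    leg12 k B (W.Δ 1) * leg23 k B (W.Δ h) = ext23 k B W.Δ (W.Δ 1 * ((1 : B) ⊗ₜ[k] h)) := by
  rw [← comul_one_mul W h, leg23_mul, ← mul_assoc, ← W.delta_one₁, W.coassoc, ext23_mul]
  rfl

lemma leg23_comul_mul_leg12_comul_one (h : B) :
    leg23 k B (W.Δ h) * leg12 k B (W.Δ 1) = ext23 k B W.Δ (((1 : B) ⊗ₜ[k] h) * W.Δ 1) := by
  rw [← comul_mul_comul_one W h, leg23_mul, mul_assoc, ← W.delta_one₂, W.coassoc, ext23_mul]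
  rfl

lemma counitMid_leg23_mul_leg12_comul_one (u : B ⊗[k] B) :
    counitMid W (leg23 k B u * leg12 k B (W.Δ 1)) = TensorProduct.map W.εs LinearMap.id u := by
  induction u using TensorProduct.induction_on with
  | zero => simp
  | tmul c d =>
    rw [TensorProduct.map_tmul, εs_apply]
    induction W.Δ 1 using TensorProduct.induction_on with
    | zero => simp
    | tmul p q => simp [TensorProduct.smul_tmul']
    | add v w hv hw => rw [map_add, mul_add, map_add, hv, hw, mul_add, map_add,
        TensorProduct.add_tmul]
  | add u v hu hv => rw [map_add, add_mul, map_add, hu, hv, map_add]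

lemma counitMid_leg23_comul_one_mul_leg12 (u : B ⊗[k] B) :
    counitMid W (leg23 k B (W.Δ 1) * leg12 k B u) = TensorProduct.map LinearMap.id W.εt u := by
  induction u using TensorProduct.induction_on with
  | zero => simp
  | tmul c d =>
    rw [TensorProduct.map_tmul, εt_apply]
    induction W.Δ 1 using TensorProduct.induction_on with
    | zero => simp
    | tmul p q => simp
    | add v w hv hw => rw [map_add, add_mul, map_add, hv, hw, add_mul, map_add,
        TensorProduct.tmul_add]
  | add u v hu hv => rw [map_add, mul_add, map_add, hu, hv, map_add]

lemma counitMid_leg12_mul_leg23_comul_one (u : B ⊗[k] B) :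
    counitMid W (leg12 k B u * leg23 k B (W.Δ 1)) = TensorProduct.map LinearMap.id W.εt' u := by
  induction u using TensorProduct.induction_on with
  | zero => simp
  | tmul c d =>
    rw [TensorProduct.map_tmul, εt'_apply]
    induction W.Δ 1 using TensorProduct.induction_on with
    | zero => simp
    | tmul p q => simp
    | add v w hv hw => rw [map_add, mul_add, map_add, hv, hw, mul_add, map_add,
        TensorProduct.tmul_add]
  | add u v hu hv => rw [map_add, add_mul, map_add, hu, hv, map_add]

lemma counitMid_leg12_comul_one_mul_leg23 (u : B ⊗[k] B) :
    counitMid W (leg12 k B (W.Δ 1) * leg23 k B u) = TensorProduct.map W.εs' LinearMap.id u := by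
  induction u using TensorProduct.induction_on with
  | zero => simp
  | tmul c d =>
    rw [TensorProduct.map_tmul, εs'_apply]
    induction W.Δ 1 using TensorProduct.induction_on with
    | zero => simp
    | tmul p q => simp [TensorProduct.smul_tmul']
    | add v w hv hw => rw [map_add, add_mul, map_add, hv, hw, add_mul, map_add,
        TensorProduct.add_tmul]
  | add u v hu hv => rw [map_add, mul_add, map_add, hu, hv, map_add]

lemma map_εs_id_comul (h : B) :
    TensorProduct.map W.εs LinearMap.id (W.Δ h) = ((1 : B) ⊗ₜ[k] h) * W.Δ 1 := by
  rw [← counitMid_leg23_mul_leg12_comul_one, leg23_comul_mul_leg12_comul_one, counitMid_ext23]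

lemma map_id_εt_comul (h : B) :
    TensorProduct.map LinearMap.id W.εt (W.Δ h) = W.Δ 1 * (h ⊗ₜ[k] (1 : B)) := by
  rw [← counitMid_leg23_comul_one_mul_leg12, leg23_comul_one_mul_leg12_comul, counitMid_ext12]

lemma map_id_εt'_comul (h : B) :
    TensorProduct.map LinearMap.id W.εt' (W.Δ h) = (h ⊗ₜ[k] (1 : B)) * W.Δ 1 := by
  rw [← counitMid_leg12_mul_leg23_comul_one, leg12_comul_mul_leg23_comul_one, counitMid_ext12]

lemma map_εs'_id_comul (h : B) :
    TensorProduct.map W.εs' LinearMap.id (W.Δ h) = W.Δ 1 * ((1 : B) ⊗ₜ[k] h) := by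
  rw [← counitMid_leg12_comul_one_mul_leg23, leg12_comul_one_mul_leg23_comul, counitMid_ext23]

def counitThird (c : B) : B ⊗[k] (B ⊗[k] B) →ₗ[k] B ⊗[k] B :=
  TensorProduct.map LinearMap.id (epsR k B (W.ε ∘ₗ LinearMap.mulLeft k c))

@[simp] lemma counitThird_tmul (c a : B) (u : B ⊗[k] B) :
    counitThird W c (a ⊗ₜ[k] u) = a ⊗ₜ[k] epsR k B (W.ε ∘ₗ LinearMap.mulLeft k c) u := rfl

lemma counitThird_ext12 (c : B) (u : B ⊗[k] B) :
    counitThird W c (ext12 k B W.Δ u) = W.Δ (epsR k B W.ε (((1 : B) ⊗ₜ[k] c) * u)) := by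
  induction u using TensorProduct.induction_on with
  | zero => simp
  | tmul p q =>
    rw [ext12_tmul, Algebra.TensorProduct.tmul_mul_tmul, one_mul, epsR_tmul, map_smul]
    induction W.Δ p using TensorProduct.induction_on with
    | zero => simp
    | tmul a b => simp
    | add v w hv hw => rw [TensorProduct.add_tmul, map_add, map_add, hv, hw, smul_add]
  | add u v hu hv => rw [map_add, map_add, hu, hv, mul_add, map_add, map_add]

lemma counitThird_leg12_mul_leg23 (c : B) (u w : B ⊗[k] B) :
    counitThird W c (leg12 k B u * leg23 k B w)
      = u * ((1 : B) ⊗ₜ[k] epsR k B (W.ε ∘ₗ LinearMap.mulLeft k c) w) := by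
  induction u using TensorProduct.induction_on with
  | zero => simp
  | tmul p q =>
    induction w using TensorProduct.induction_on with
    | zero => simp
    | tmul r s => simp
    | add w w' hw hw' => rw [map_add, mul_add, map_add, hw, hw', map_add,
        TensorProduct.tmul_add, mul_add]
  | add u u' hu hu' => rw [map_add, add_mul, map_add, hu, hu', add_mul]

lemma counitThird_leg23_mul_leg12 (c : B) (w u : B ⊗[k] B) :
    counitThird W c (leg23 k B w * leg12 k B u)
      = ((1 : B) ⊗ₜ[k] epsR k B (W.ε ∘ₗ LinearMap.mulLeft k c) w) * u := by
  induction u using TensorProduct.induction_on with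
  | zero => simp
  | tmul p q =>
    induction w using TensorProduct.induction_on with
    | zero => simp
    | tmul r s => simp
    | add w w' hw hw' => rw [map_add, add_mul, map_add, hw, hw', map_add,
        TensorProduct.tmul_add, add_mul]
  | add u u' hu hu' => rw [map_add, mul_add, map_add, hu, hu', mul_add]

def counitFirst (z : B) : B ⊗[k] (B ⊗[k] B) →ₗ[k] B ⊗[k] B :=
  (TensorProduct.lid k (B ⊗[k] B)).toLinearMap ∘ₗ
    TensorProduct.map (W.ε ∘ₗ LinearMap.mulRight k z) LinearMap.id

@[simp] lemma counitFirst_tmul (z a : B) (u : B ⊗[k] B) :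
    counitFirst W z (a ⊗ₜ[k] u) = W.ε (a * z) • u := by
  simp [counitFirst]

lemma counitFirst_ext23 (z : B) (u : B ⊗[k] B) :
    counitFirst W z (ext23 k B W.Δ u) = W.Δ (epsL k B W.ε (u * (z ⊗ₜ[k] (1 : B)))) := by
  induction u using TensorProduct.induction_on with
  | zero => simp
  | tmul p q => simp
  | add u v hu hv => rw [map_add, map_add, hu, hv, add_mul, map_add, map_add]

lemma counitFirst_leg23_mul_leg12 (z : B) (w u : B ⊗[k] B) :
    counitFirst W z (leg23 k B w * leg12 k B u)
      = w * (epsL k B (W.ε ∘ₗ LinearMap.mulRight k z) u ⊗ₜ[k] (1 : B)) := by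
  induction u using TensorProduct.induction_on with
  | zero => simp
  | tmul p q =>
    induction w using TensorProduct.induction_on with
    | zero => simp
    | tmul r s =>
      simp only [leg12_tmul, leg23_apply, Algebra.TensorProduct.tmul_mul_tmul, one_mul,
        mul_one, counitFirst_tmul, epsL_tmul, TensorProduct.smul_tmul', mul_smul_comm]
      rfl
    | add w w' hw hw' => rw [map_add, add_mul, map_add, hw, hw', add_mul]
  | add u u' hu hu' => rw [map_add, mul_add, map_add, hu, hu', map_add,
      TensorProduct.add_tmul, mul_add]

lemma comul_εs_eq_comul_one_mul (c : B) : W.Δ (W.εs c) = W.Δ 1 * ((1 : B) ⊗ₜ[k] W.εs c) := by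
  conv_lhs => rw [εs_apply]
  rw [← counitThird_ext12, W.delta_one₁, counitThird_leg12_mul_leg23, ← εs_eq_epsR]

lemma comul_εs_eq_mul_comul_one (c : B) : W.Δ (W.εs c) = ((1 : B) ⊗ₜ[k] W.εs c) * W.Δ 1 := by
  conv_lhs => rw [εs_apply]
  rw [← counitThird_ext12, W.delta_one₂, counitThird_leg23_mul_leg12, ← εs_eq_epsR]

lemma comul_εt_eq_comul_one_mul (z : B) : W.Δ (W.εt z) = W.Δ 1 * (W.εt z ⊗ₜ[k] (1 : B)) := by
  conv_lhs => rw [εt_apply]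
  rw [← counitFirst_ext23, ← W.coassoc, W.delta_one₂, counitFirst_leg23_mul_leg12,
    ← εt_eq_epsL]

lemma comul_one_mul_one_tmul_εs (c : B) :
    W.Δ 1 * ((1 : B) ⊗ₜ[k] W.εs c) = ((1 : B) ⊗ₜ[k] W.εs c) * W.Δ 1 := by
  rw [← comul_εs_eq_comul_one_mul, comul_εs_eq_mul_comul_one]

lemma comul_εs_mul (c b : B) : W.Δ (W.εs c * b) = ((1 : B) ⊗ₜ[k] W.εs c) * W.Δ b := by
  rw [W.comul_mul, comul_εs_eq_mul_comul_one, mul_assoc, comul_one_mul]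

lemma comul_mul_εt (b z : B) : W.Δ (b * W.εt z) = W.Δ b * (W.εt z ⊗ₜ[k] (1 : B)) := by
  rw [W.comul_mul, comul_εt_eq_comul_one_mul, ← mul_assoc, comul_mul_comul_one]

lemma counit_mul_eq_pairF (a b : B) :
    W.ε (a * b) = pairF k B (W.ε ∘ₗ LinearMap.mulLeft k a) (W.ε ∘ₗ LinearMap.mulRight k b)
      (W.Δ 1) := by
  simpa using W.eps_weak₁ a 1 b

lemma counit_mul_eq_pairF' (a b : B) :
    W.ε (a * b) = pairF k B (W.ε ∘ₗ LinearMap.mulRight k b) (W.ε ∘ₗ LinearMap.mulLeft k a)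
      (W.Δ 1) := by
  simpa using W.eps_weak₂ a 1 b

lemma counit_εs_mul (a m : B) : W.ε (W.εs a * m) = W.ε (a * m) := by
  change (W.ε ∘ₗ LinearMap.mulRight k m) (W.εs a) = _
  rw [εs_apply, apply_epsR, pairF_one_tmul_mul, ← counit_mul_eq_pairF']

lemma counit_mul_εt (m a : B) : W.ε (m * W.εt a) = W.ε (m * a) := by
  change (W.ε ∘ₗ LinearMap.mulLeft k m) (W.εt a) = _
  rw [εt_apply, apply_epsL, pairF_mul_tmul_one, ← counit_mul_eq_pairF']

lemma counit_εt'_mul (d q : B) : W.ε (W.εt' d * q) = W.ε (d * q) := by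
  change (W.ε ∘ₗ LinearMap.mulRight k q) (W.εt' d) = _
  rw [εt'_apply, apply_epsL, pairF_tmul_one_mul, ← counit_mul_eq_pairF]

lemma counit_mul_εs' (a b : B) : W.ε (a * W.εs' b) = W.ε (a * b) := by
  change (W.ε ∘ₗ LinearMap.mulLeft k a) (W.εs' b) = _
  rw [εs'_apply, apply_epsR, pairF_mul_one_tmul, ← counit_mul_eq_pairF]

lemma εs_mul_eq_εs_εs_mul (a b : B) : W.εs (a * b) = W.εs (W.εs a * b) := by
  rw [εs_apply, εs_apply W (W.εs a * b)]
  induction W.Δ 1 using TensorProduct.induction_on with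
  | zero => simp
  | tmul p q => simp [mul_assoc, counit_εs_mul]
  | add u v hu hv => rw [mul_add, mul_add, map_add, map_add, hu, hv]

lemma εt_mul_eq_εt_mul_εt (a b : B) : W.εt (a * b) = W.εt (a * W.εt b) := by
  rw [εt_apply, εt_apply W (a * W.εt b)]
  induction W.Δ 1 using TensorProduct.induction_on with
  | zero => simp
  | tmul p q => simp [← mul_assoc, counit_mul_εt]
  | add u v hu hv => rw [add_mul, add_mul, map_add, map_add, hu, hv]

lemma εs_one : W.εs 1 = 1 := by
  rw [εs_apply, ← Algebra.TensorProduct.one_def, one_mul, W.counit_right]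

lemma εt_one : W.εt 1 = 1 := by
  rw [εt_apply, ← Algebra.TensorProduct.one_def, mul_one, W.counit_left]

lemma counit_mul_eq_of_εt_eq_one {c : B} (hc : W.εt c = 1) (m : B) : W.ε (m * c) = W.ε m := by
  rw [← counit_mul_εt, hc, mul_one]

lemma counit_mul_eq_of_εs_eq_one {c : B} (hc : W.εs c = 1) (m : B) : W.ε (c * m) = W.ε m := by
  rw [← counit_εs_mul, hc, one_mul]

lemma εs_eq_one_of_mul_eq_one {x xi : B} (hεs : W.εs x = 1) (hx : x * xi = 1) : W.εs xi = 1 := by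
  rw [← εs_one W, ← hx, εs_mul_eq_εs_εs_mul, hεs, one_mul]

lemma epsL_map_εs_id_mul (v u : B ⊗[k] B) :
    epsL k B W.ε (TensorProduct.map W.εs LinearMap.id v * u) = epsL k B W.ε (v * u) := by
  induction v using TensorProduct.induction_on with
  | zero => simp
  | tmul c d =>
    induction u using TensorProduct.induction_on with
    | zero => simp
    | tmul p q => simp [counit_εs_mul]
    | add u u' hu hu' => rw [mul_add, map_add, mul_add, map_add, hu, hu']
  | add v v' hv hv' => rw [map_add, add_mul, map_add, add_mul, map_add, hv, hv']

lemma epsR_map_id_εt'_mul (v u : B ⊗[k] B) :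
    epsR k B W.ε (TensorProduct.map LinearMap.id W.εt' v * u) = epsR k B W.ε (v * u) := by
  induction v using TensorProduct.induction_on with
  | zero => simp
  | tmul c d =>
    induction u using TensorProduct.induction_on with
    | zero => simp
    | tmul p q => simp [counit_εt'_mul]
    | add u u' hu hu' => rw [mul_add, map_add, mul_add, map_add, hu, hu']
  | add v v' hv hv' => rw [map_add, add_mul, map_add, add_mul, map_add, hv, hv']

lemma epsL_mul_map_εs'_id (u v : B ⊗[k] B) :
    epsL k B W.ε (u * TensorProduct.map W.εs' LinearMap.id v) = epsL k B W.ε (u * v) := by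
  induction v using TensorProduct.induction_on with
  | zero => simp
  | tmul c d =>
    induction u using TensorProduct.induction_on with
    | zero => simp
    | tmul p q => simp [counit_mul_εs']
    | add u u' hu hu' => rw [add_mul, map_add, add_mul, map_add, hu, hu']
  | add v v' hv hv' => rw [map_add, mul_add, map_add, mul_add, map_add, hv, hv']

lemma epsR_mul_map_id_εt (u v : B ⊗[k] B) :
    epsR k B W.ε (u * TensorProduct.map LinearMap.id W.εt v) = epsR k B W.ε (u * v) := by
  induction v using TensorProduct.induction_on with
  | zero => simp
  | tmul c d =>
    induction u using TensorProduct.induction_on with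
    | zero => simp
    | tmul p q => simp [counit_mul_εt]
    | add u u' hu hu' => rw [add_mul, map_add, add_mul, map_add, hu, hu']
  | add v v' hv hv' => rw [map_add, mul_add, map_add, mul_add, map_add, hv, hv']

lemma epsL_comul_mul (a : B) (u : B ⊗[k] B) :
    epsL k B W.ε (W.Δ a * u) = a * epsL k B W.ε (W.Δ 1 * u) := by
  rw [← epsL_map_εs_id_mul, map_εs_id_comul, mul_assoc, epsL_one_tmul_mul]

lemma epsR_comul_mul (a : B) (u : B ⊗[k] B) :
    epsR k B W.ε (W.Δ a * u) = a * epsR k B W.ε (W.Δ 1 * u) := by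
  rw [← epsR_map_id_εt'_mul, map_id_εt'_comul, mul_assoc, epsR_tmul_one_mul]

lemma epsL_mul_comul (u : B ⊗[k] B) (a : B) :
    epsL k B W.ε (u * W.Δ a) = epsL k B W.ε (u * W.Δ 1) * a := by
  rw [← epsL_mul_map_εs'_id, map_εs'_id_comul, ← mul_assoc, epsL_mul_one_tmul]

lemma epsR_mul_comul (u : B ⊗[k] B) (a : B) :
    epsR k B W.ε (u * W.Δ a) = epsR k B W.ε (u * W.Δ 1) * a := by
  rw [← epsR_mul_map_id_εt, map_id_εt_comul, ← mul_assoc, epsR_mul_tmul_one]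

lemma epsL_mul_tmul_of_εt_eq_one {x : B} (hx : W.εt x = 1) (u : B ⊗[k] B) :
    epsL k B W.ε (u * (x ⊗ₜ[k] x)) = epsL k B W.ε u * x := by
  induction u using TensorProduct.induction_on with
  | zero => simp
  | tmul p q => simp [counit_mul_eq_of_εt_eq_one W hx]
  | add u v hu hv => rw [add_mul, map_add, map_add, hu, hv, add_mul]

lemma epsR_mul_tmul_of_εt_eq_one {x : B} (hx : W.εt x = 1) (u : B ⊗[k] B) :
    epsR k B W.ε (u * (x ⊗ₜ[k] x)) = epsR k B W.ε u * x := by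
  induction u using TensorProduct.induction_on with
  | zero => simp
  | tmul p q => simp [counit_mul_eq_of_εt_eq_one W hx]
  | add u v hu hv => rw [add_mul, map_add, map_add, hu, hv, add_mul]

lemma epsL_tmul_mul_of_εs_eq_one {x : B} (hx : W.εs x = 1) (u : B ⊗[k] B) :
    epsL k B W.ε ((x ⊗ₜ[k] x) * u) = x * epsL k B W.ε u := by
  induction u using TensorProduct.induction_on with
  | zero => simp
  | tmul p q => simp [counit_mul_eq_of_εs_eq_one W hx]
  | add u v hu hv => rw [mul_add, map_add, map_add, hu, hv, mul_add]

lemma epsR_tmul_mul_of_εs_eq_one {x : B} (hx : W.εs x = 1) (u : B ⊗[k] B) :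
    epsR k B W.ε ((x ⊗ₜ[k] x) * u) = x * epsR k B W.ε u := by
  induction u using TensorProduct.induction_on with
  | zero => simp
  | tmul p q => simp [counit_mul_eq_of_εs_eq_one W hx]
  | add u v hu hv => rw [mul_add, map_add, map_add, hu, hv, mul_add]

end WeakBialgebra

section Antipode

variable (W : WeakHopf k B) {x xi : B}

abbrev WeakHopf.toCoalgebra : Coalgebra k B where
  comul := W.Δ
  counit := W.ε
  coassoc := LinearMap.ext W.coassoc
  rTensor_counit_comp_comul := LinearMap.ext fun h =>
    (TensorProduct.lid k B).injective (by simpa [epsL, LinearMap.rTensor] using W.counit_left h)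
  lTensor_counit_comp_comul := LinearMap.ext fun h =>
    (TensorProduct.rid k B).injective (by simpa [epsR, LinearMap.lTensor] using W.counit_right h)

def WeakHopf.conv (f g : B →ₗ[k] B) : B →ₗ[k] B :=
  mul2 k B ∘ₗ TensorProduct.map f g ∘ₗ W.Δ

lemma conv_apply (f g : B →ₗ[k] B) (h : B) :
    W.conv f g h = mul2 k B (TensorProduct.map f g (W.Δ h)) := rfl

lemma conv_assoc (f g h : B →ₗ[k] B) : W.conv (W.conv f g) h = W.conv f (W.conv g h) :=
  letI := W.toCoalgebra
  congrArg WithConv.ofConv (mul_assoc (WithConv.toConv f) (WithConv.toConv g) (WithConv.toConv h))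

lemma conv_mulLeft_comp (c : B) (f g : B →ₗ[k] B) :
    W.conv (LinearMap.mulLeft k c ∘ₗ f) g = LinearMap.mulLeft k c ∘ₗ W.conv f g := by
  ext h
  simp only [conv_apply, LinearMap.comp_apply]
  induction W.Δ h using TensorProduct.induction_on with
  | zero => simp
  | tmul p q => simp [mul_assoc]
  | add u v hu hv => simp only [map_add, hu, hv]

lemma conv_mulRight_comp (c : B) (f g : B →ₗ[k] B) :
    W.conv f (LinearMap.mulRight k c ∘ₗ g) = LinearMap.mulRight k c ∘ₗ W.conv f g := by
  ext h
  simp only [conv_apply, LinearMap.comp_apply]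
  induction W.Δ h using TensorProduct.induction_on with
  | zero => simp
  | tmul p q => simp [mul_assoc]
  | add u v hu hv => simp only [map_add, hu, hv]

lemma conv_id_S : W.conv LinearMap.id W.S = W.εt := LinearMap.ext W.antipode₁

lemma conv_S_id : W.conv W.S LinearMap.id = W.εs := LinearMap.ext W.antipode₂

lemma conv_S_conv_id_S : W.conv W.S (W.conv LinearMap.id W.S) = W.S := by
  ext h
  rw [← W.antipode₃ h, ext23, TensorProduct.map_map]
  rfl

lemma conv_S_εt : W.conv W.S W.εt = W.S := by
  rw [← conv_id_S, conv_S_conv_id_S]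

lemma conv_εs_S : W.conv W.εs W.S = W.S := by
  rw [← conv_S_id, conv_assoc, conv_S_conv_id_S]

lemma S_one : W.S 1 = 1 := by
  have h : TensorProduct.map W.εs W.S (W.Δ 1)
      = TensorProduct.map LinearMap.id W.S (TensorProduct.map W.εs LinearMap.id (W.Δ 1)) := by
    rw [TensorProduct.map_map]
    rfl
  rw [← conv_εs_S, conv_apply, h, map_εs_id_comul, ← Algebra.TensorProduct.one_def, one_mul,
    ← conv_apply, conv_id_S, εt_one]

lemma εt_mul_εs_comm (z c : B) : W.εt z * W.εs c = W.εs c * W.εt z := by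
  rw [εt_eq_epsL, ← epsL_mul_one_tmul, comul_one_mul_one_tmul_εs, epsL_one_tmul_mul]

lemma εs_comp_mulLeft_εs (c : B) :
    W.εs ∘ₗ LinearMap.mulLeft k (W.εs c) = W.conv W.S (LinearMap.mulLeft k (W.εs c)) := by
  ext b
  rw [LinearMap.comp_apply, LinearMap.mulLeft_apply, ← LinearMap.congr_fun (conv_S_id W),
    conv_apply, conv_apply, comul_εs_mul, map_one_tmul_mul, LinearMap.id_comp]

lemma conv_εs_comp_mulLeft_S (w : B) :
    W.conv (W.εs ∘ₗ LinearMap.mulLeft k w) W.S = LinearMap.mulRight k (W.εs w) ∘ₗ W.S := by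
  have hεs : W.εs ∘ₗ LinearMap.mulLeft k w = W.εs ∘ₗ LinearMap.mulLeft k (W.εs w) :=
    LinearMap.ext fun b => εs_mul_eq_εs_εs_mul W w b
  have hcomm : LinearMap.mulLeft k (W.εs w) ∘ₗ W.εt = LinearMap.mulRight k (W.εs w) ∘ₗ W.εt :=
    LinearMap.ext fun b => (εt_mul_εs_comm W b w).symm
  rw [hεs, εs_comp_mulLeft_εs, conv_assoc, ← LinearMap.comp_id (LinearMap.mulLeft k _),
    conv_mulLeft_comp, conv_id_S, hcomm, conv_mulRight_comp, conv_S_εt]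

def WeakHopf.conv₂ (f g : B ⊗[k] B →ₗ[k] B) : B ⊗[k] B →ₗ[k] B :=
  mul2 k B ∘ₗ TensorProduct.map f g ∘ₗ
    (TensorProduct.tensorTensorTensorComm k B B B B).toLinearMap ∘ₗ TensorProduct.map W.Δ W.Δ

lemma conv₂_tmul (f g : B ⊗[k] B →ₗ[k] B) (a b : B) :
    W.conv₂ f g (a ⊗ₜ[k] b) = mul2 k B (TensorProduct.map f g
      (TensorProduct.tensorTensorTensorComm k B B B B (W.Δ a ⊗ₜ[k] W.Δ b))) := rfl

lemma conv₂_assoc (f g h : B ⊗[k] B →ₗ[k] B) :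
    W.conv₂ (W.conv₂ f g) h = W.conv₂ f (W.conv₂ g h) :=
  letI := W.toCoalgebra
  congrArg WithConv.ofConv (mul_assoc (WithConv.toConv f) (WithConv.toConv g) (WithConv.toConv h))

lemma mul2_map_comp_mul2_tensorTensorTensorComm (F G : B →ₗ[k] B) (u v : B ⊗[k] B) :
    mul2 k B (TensorProduct.map (F ∘ₗ mul2 k B) (G ∘ₗ mul2 k B)
        (TensorProduct.tensorTensorTensorComm k B B B B (u ⊗ₜ[k] v)))
      = mul2 k B (TensorProduct.map F G (u * v)) := by
  induction u using TensorProduct.induction_on with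
  | zero => simp
  | tmul a₁ a₂ =>
    induction v using TensorProduct.induction_on with
    | zero => simp
    | tmul b₁ b₂ => simp
    | add v v' hv hv' => simp only [TensorProduct.tmul_add, map_add, mul_add, hv, hv']
  | add u u' hu hu' => simp only [TensorProduct.add_tmul, map_add, add_mul, hu, hu']

lemma conv₂_comp_mul2 (F G : B →ₗ[k] B) :
    W.conv₂ (F ∘ₗ mul2 k B) (G ∘ₗ mul2 k B) = W.conv F G ∘ₗ mul2 k B := by
  ext a b
  simp only [AlgebraTensorModule.curry_apply, curry_apply, LinearMap.coe_restrictScalars]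
  rw [conv₂_tmul, mul2_map_comp_mul2_tensorTensorTensorComm, ← W.comul_mul]
  rfl

def WeakHopf.revMulS : B ⊗[k] B →ₗ[k] B :=
  mul2 k B ∘ₗ TensorProduct.map W.S W.S ∘ₗ (TensorProduct.comm k B B).toLinearMap

@[simp] lemma revMulS_tmul (a b : B) : W.revMulS (a ⊗ₜ[k] b) = W.S b * W.S a := rfl

lemma mul2_map_mul2_revMulS_tensorTensorTensorComm (u v : B ⊗[k] B) :
    mul2 k B (TensorProduct.map (mul2 k B) W.revMulS
        (TensorProduct.tensorTensorTensorComm k B B B B (u ⊗ₜ[k] v)))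
      = mul2 k B (TensorProduct.map LinearMap.id W.S
          (u * (mul2 k B (TensorProduct.map LinearMap.id W.S v) ⊗ₜ[k] (1 : B)))) := by
  induction u using TensorProduct.induction_on with
  | zero => simp
  | tmul c₁ c₂ =>
    induction v using TensorProduct.induction_on with
    | zero => simp
    | tmul d₁ d₂ => simp [mul_assoc]
    | add v v' hv hv' => simp only [TensorProduct.tmul_add, TensorProduct.add_tmul, map_add,
        mul_add, hv, hv']
  | add u u' hu hu' => simp only [TensorProduct.add_tmul, map_add, add_mul, hu, hu']

lemma conv₂_mul2_revMulS : W.conv₂ (mul2 k B) W.revMulS = W.εt ∘ₗ mul2 k B := by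
  ext a b
  simp only [AlgebraTensorModule.curry_apply, curry_apply, LinearMap.coe_restrictScalars]
  rw [conv₂_tmul, mul2_map_mul2_revMulS_tensorTensorTensorComm, ← conv_apply W _ _ b, conv_id_S,
    ← comul_mul_εt, ← conv_apply, conv_id_S, ← εt_mul_eq_εt_mul_εt]
  rfl

lemma mul2_map_εs_mul2_revMulS_tmul (p q : B) (v : B ⊗[k] B) :
    mul2 k B (TensorProduct.map (W.εs ∘ₗ mul2 k B) W.revMulS
        (TensorProduct.tensorTensorTensorComm k B B B B ((p ⊗ₜ[k] q) ⊗ₜ[k] v)))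
      = mul2 k B (TensorProduct.map (W.εs ∘ₗ LinearMap.mulLeft k p) W.S v) * W.S q := by
  induction v using TensorProduct.induction_on with
  | zero => simp
  | tmul r s => simp [mul_assoc]
  | add v v' hv hv' => simp only [TensorProduct.tmul_add, map_add, add_mul, hv, hv']

lemma mul2_map_εs_mul2_revMulS_comul (u : B ⊗[k] B) (b : B) :
    mul2 k B (TensorProduct.map (W.εs ∘ₗ mul2 k B) W.revMulS
        (TensorProduct.tensorTensorTensorComm k B B B B (u ⊗ₜ[k] W.Δ b)))
      = W.S b * mul2 k B (TensorProduct.map W.εs W.S u) := by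
  induction u using TensorProduct.induction_on with
  | zero => simp
  | tmul p q =>
    rw [mul2_map_εs_mul2_revMulS_tmul, ← conv_apply, conv_εs_comp_mulLeft_S]
    simp [mul_assoc]
  | add u u' hu hu' => simp only [TensorProduct.add_tmul, map_add, mul_add, hu, hu']

lemma conv₂_εs_mul2_revMulS : W.conv₂ (W.εs ∘ₗ mul2 k B) W.revMulS = W.revMulS := by
  ext a b
  simp only [AlgebraTensorModule.curry_apply, curry_apply, LinearMap.coe_restrictScalars]
  rw [conv₂_tmul, mul2_map_εs_mul2_revMulS_comul, ← conv_apply, conv_εs_S, revMulS_tmul]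

theorem antipode_mul (a b : B) : W.S (a * b) = W.S b * W.S a := by
  have h : W.S ∘ₗ mul2 k B = W.revMulS := calc
    W.S ∘ₗ mul2 k B = W.conv₂ (W.S ∘ₗ mul2 k B) (W.εt ∘ₗ mul2 k B) := by
      rw [conv₂_comp_mul2, conv_S_εt]
    _ = W.conv₂ (W.conv₂ (W.S ∘ₗ mul2 k B) (LinearMap.id ∘ₗ mul2 k B)) W.revMulS := by
      rw [← conv₂_mul2_revMulS, conv₂_assoc, LinearMap.id_comp]
    _ = W.revMulS := by
      rw [conv₂_comp_mul2, conv_S_id, conv₂_εs_mul2_revMulS]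
  exact LinearMap.congr_fun h (a ⊗ₜ[k] b)

lemma mul2_map_S_id_mul_tmul (u : B ⊗[k] B) (p q : B) :
    mul2 k B (TensorProduct.map W.S LinearMap.id (u * (p ⊗ₜ[k] q)))
      = W.S p * mul2 k B (TensorProduct.map W.S LinearMap.id u) * q := by
  induction u using TensorProduct.induction_on with
  | zero => simp
  | tmul c d => simp [antipode_mul, mul_assoc]
  | add u v hu hv => simp only [add_mul, map_add, hu, hv, mul_add]

lemma mul2_map_id_S_tmul_mul (u : B ⊗[k] B) (p q : B) :
    mul2 k B (TensorProduct.map LinearMap.id W.S ((p ⊗ₜ[k] q) * u))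
      = p * mul2 k B (TensorProduct.map LinearMap.id W.S u) * W.S q := by
  induction u using TensorProduct.induction_on with
  | zero => simp
  | tmul c d => simp [antipode_mul, mul_assoc]
  | add u v hu hv => simp only [mul_add, map_add, hu, hv, add_mul]

lemma mul2_map_S_id_comul_mul (hxi : W.εs xi = 1) (u : B ⊗[k] B) :
    mul2 k B (TensorProduct.map W.S LinearMap.id (W.Δ xi * u))
      = mul2 k B (TensorProduct.map W.S LinearMap.id u) := by
  induction u using TensorProduct.induction_on with
  | zero => simp
  | tmul p q =>
    rw [mul2_map_S_id_mul_tmul, ← conv_apply, conv_S_id, hxi, mul_one]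
    simp
  | add u v hu hv => simp only [mul_add, map_add, hu, hv]

lemma mul2_map_id_S_mul_comul (hx : W.εt x = 1) (u : B ⊗[k] B) :
    mul2 k B (TensorProduct.map LinearMap.id W.S (u * W.Δ x))
      = mul2 k B (TensorProduct.map LinearMap.id W.S u) := by
  induction u using TensorProduct.induction_on with
  | zero => simp
  | tmul p q =>
    rw [mul2_map_id_S_tmul_mul, ← conv_apply, conv_id_S, hx, mul_one]
    simp
  | add u v hu hv => simp only [add_mul, map_add, hu, hv]

end Antipode

section Gauge

variable {W : WeakHopf k B} (T : Twist k B W) {x xi : B}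

lemma comul_mul_comul_eq_comul_one (hx : x * xi = 1) : W.Δ x * W.Δ xi = W.Δ 1 := by
  rw [← W.comul_mul, hx]

lemma gauge_prod_eq (hx₁ : x * xi = 1) (hx₂ : xi * x = 1) :
    W.Δ xi * T.Θ * (x ⊗ₜ[k] x) * ((xi ⊗ₜ[k] xi) * T.Θbar * W.Δ x) = W.Δ 1 := by
  have hxx : (x ⊗ₜ[k] x) * (xi ⊗ₜ[k] xi) = 1 := by
    rw [Algebra.TensorProduct.tmul_mul_tmul, hx₁, Algebra.TensorProduct.one_def]
  simp only [mul_assoc]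
  rw [← mul_assoc (x ⊗ₜ[k] x), hxx, one_mul, ← mul_assoc T.Θ, T.prod_eq, comul_one_mul,
    ← W.comul_mul, hx₂]

lemma gauge_counit₁ (hx₂ : xi * x = 1) (hεt : W.εt x = 1) :
    epsL k B W.ε (W.Δ xi * T.Θ * (x ⊗ₜ[k] x)) = 1 := by
  rw [epsL_mul_tmul_of_εt_eq_one W hεt, epsL_comul_mul, ← T.idem_left, T.counit₁, mul_one, hx₂]

lemma gauge_counit₂ (hx₂ : xi * x = 1) (hεt : W.εt x = 1) :
    epsR k B W.ε (W.Δ xi * T.Θ * (x ⊗ₜ[k] x)) = 1 := by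
  rw [epsR_mul_tmul_of_εt_eq_one W hεt, epsR_comul_mul, ← T.idem_left, T.counit₂, mul_one, hx₂]

lemma gauge_counit₃ (hx₂ : xi * x = 1) (hεs : W.εs xi = 1) :
    epsL k B W.ε ((xi ⊗ₜ[k] xi) * T.Θbar * W.Δ x) = 1 := by
  rw [mul_assoc, epsL_tmul_mul_of_εs_eq_one W hεs, epsL_mul_comul, ← T.idem_right, T.counit₃,
    one_mul, hx₂]

lemma gauge_counit₄ (hx₂ : xi * x = 1) (hεs : W.εs xi = 1) :
    epsR k B W.ε ((xi ⊗ₜ[k] xi) * T.Θbar * W.Δ x) = 1 := by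
  rw [mul_assoc, epsR_tmul_mul_of_εs_eq_one W hεs, epsR_mul_comul, ← T.idem_right, T.counit₄,
    one_mul, hx₂]

lemma ext12_mul_leg12_gauge (hΔ : W.Δ x * W.Δ xi = W.Δ 1) {w : B ⊗[k] B} (hw : w = W.Δ 1 * w)
    (u : B ⊗[k] B) :
    ext12 k B W.Δ (u * (x ⊗ₜ[k] x)) * leg12 k B (W.Δ xi * w * (x ⊗ₜ[k] x))
      = ext12 k B W.Δ u * leg12 k B w * (x ⊗ₜ[k] (x ⊗ₜ[k] x)) := by
  rw [ext12_mul, ext12_tmul_eq_leg12_mul, leg12_mul (W.Δ xi * w)]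
  simp only [mul_assoc]
  rw [(commute_one_tmul_one_tmul_leg12 x (W.Δ xi * w)).left_comm,
    ← mul_assoc (leg12 k B (W.Δ x)), ← leg12_mul, ← mul_assoc (W.Δ x), hΔ, ← hw]
  simp [Algebra.TensorProduct.tmul_mul_tmul]

lemma ext23_mul_leg23_gauge (hΔ : W.Δ x * W.Δ xi = W.Δ 1) {w : B ⊗[k] B} (hw : w = W.Δ 1 * w)
    (u : B ⊗[k] B) :
    ext23 k B W.Δ (u * (x ⊗ₜ[k] x)) * leg23 k B (W.Δ xi * w * (x ⊗ₜ[k] x))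
      = ext23 k B W.Δ u * leg23 k B w * (x ⊗ₜ[k] (x ⊗ₜ[k] x)) := by
  rw [ext23_mul, ext23_tmul_eq_mul_leg23, leg23_mul (W.Δ xi * w)]
  simp only [mul_assoc]
  rw [← mul_assoc (leg23 k B (W.Δ x)), ← leg23_mul, ← mul_assoc (W.Δ x), hΔ, ← hw,
    (commute_tmul_one_leg23 x w).left_comm]
  simp [Algebra.TensorProduct.tmul_mul_tmul]

lemma leg12_mul_ext12_gauge (hΔ : W.Δ x * W.Δ xi = W.Δ 1) {w : B ⊗[k] B} (hw : w = w * W.Δ 1)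
    (v : B ⊗[k] B) :
    leg12 k B ((xi ⊗ₜ[k] xi) * w * W.Δ x) * ext12 k B W.Δ ((xi ⊗ₜ[k] xi) * w * v)
      = (xi ⊗ₜ[k] (xi ⊗ₜ[k] xi)) * leg12 k B w * ext12 k B W.Δ (w * v) := by
  rw [mul_assoc _ w v, leg12_mul, leg12_mul, ext12_mul _ (xi ⊗ₜ[k] xi), ext12_tmul_eq_leg12_mul]
  simp only [mul_assoc]
  rw [← mul_assoc (leg12 k B (W.Δ x)), ← leg12_mul, hΔ, ← mul_assoc (leg12 k B w), ← leg12_mul,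
    ← hw, ← (commute_one_tmul_one_tmul_leg12 xi w).left_comm, ← mul_assoc]
  simp [Algebra.TensorProduct.tmul_mul_tmul]

lemma leg23_mul_ext23_gauge (hΔ : W.Δ x * W.Δ xi = W.Δ 1) {w : B ⊗[k] B} (hw : w = w * W.Δ 1)
    (v : B ⊗[k] B) :
    leg23 k B ((xi ⊗ₜ[k] xi) * w * W.Δ x) * ext23 k B W.Δ ((xi ⊗ₜ[k] xi) * w * v)
      = (xi ⊗ₜ[k] (xi ⊗ₜ[k] xi)) * leg23 k B w * ext23 k B W.Δ (w * v) := by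
  rw [mul_assoc _ w v, leg23_mul, leg23_mul, ext23_mul _ (xi ⊗ₜ[k] xi), ext23_tmul_eq_mul_leg23]
  simp only [mul_assoc]
  rw [← (commute_tmul_one_leg23 xi (W.Δ x)).left_comm, ← (commute_tmul_one_leg23 xi w).left_comm,
    ← mul_assoc (leg23 k B (W.Δ x)), ← leg23_mul, hΔ, ← mul_assoc (leg23 k B w), ← leg23_mul,
    ← hw, ← mul_assoc]
  simp [Algebra.TensorProduct.tmul_mul_tmul]

lemma gauge_cocycle₁ (hΔ : W.Δ x * W.Δ xi = W.Δ 1) :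
    ext12 k B W.Δ (W.Δ xi * T.Θ * (x ⊗ₜ[k] x)) * leg12 k B (W.Δ xi * T.Θ * (x ⊗ₜ[k] x))
      = ext23 k B W.Δ (W.Δ xi * T.Θ * (x ⊗ₜ[k] x)) * leg23 k B (W.Δ xi * T.Θ * (x ⊗ₜ[k] x)) := by
  rw [ext12_mul_leg12_gauge hΔ T.idem_left, ext23_mul_leg23_gauge hΔ T.idem_left, ext12_mul,
    ext23_mul, W.coassoc, mul_assoc (ext23 k B W.Δ (W.Δ xi)), T.cocycle₁]
  simp only [mul_assoc]

lemma gauge_cocycle₂ (hΔ : W.Δ x * W.Δ xi = W.Δ 1) :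
    leg12 k B ((xi ⊗ₜ[k] xi) * T.Θbar * W.Δ x) * ext12 k B W.Δ ((xi ⊗ₜ[k] xi) * T.Θbar * W.Δ x)
      = leg23 k B ((xi ⊗ₜ[k] xi) * T.Θbar * W.Δ x)
          * ext23 k B W.Δ ((xi ⊗ₜ[k] xi) * T.Θbar * W.Δ x) := by
  rw [leg12_mul_ext12_gauge hΔ T.idem_right, leg23_mul_ext23_gauge hΔ T.idem_right, ext12_mul,
    ext23_mul, W.coassoc]
  simp only [mul_assoc]
  rw [← mul_assoc (leg12 k B T.Θbar), T.cocycle₂, mul_assoc]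

lemma gauge_cocycle₃ (hx : x * xi = 1) :
    ext12 k B W.Δ ((xi ⊗ₜ[k] xi) * T.Θbar * W.Δ x) * ext23 k B W.Δ (W.Δ xi * T.Θ * (x ⊗ₜ[k] x))
      = leg12 k B (W.Δ xi * T.Θ * (x ⊗ₜ[k] x)) * leg23 k B ((xi ⊗ₜ[k] xi) * T.Θbar * W.Δ x) := by
  simp only [leg12_mul, leg23_mul, ext12_mul, ext23_mul]
  rw [ext12_tmul_eq_leg12_mul W xi xi, ext23_tmul_eq_mul_leg23 W x x]
  simp only [mul_assoc]
  rw [← W.coassoc xi, ← mul_assoc (ext12 k B W.Δ (W.Δ x)), ← ext12_mul,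
    comul_mul_comul_eq_comul_one hx, ← mul_assoc (ext12 k B W.Δ T.Θbar), ← ext12_mul,
    ← T.idem_right, ← mul_assoc (ext12 k B W.Δ T.Θbar), T.cocycle₃, mul_assoc,
    (commute_one_tmul_one_tmul_leg12 xi T.Θ).left_comm,
    ← (commute_tmul_one_leg23 x T.Θbar).left_comm, ← mul_assoc ((1 : B) ⊗ₜ[k] ((1 : B) ⊗ₜ[k] xi)),
    ← mul_assoc (leg12 k B (x ⊗ₜ[k] x))]
  congr 3
  simp [Algebra.TensorProduct.tmul_mul_tmul, hx]

lemma gauge_cocycle₄ (hx : x * xi = 1) :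
    ext23 k B W.Δ ((xi ⊗ₜ[k] xi) * T.Θbar * W.Δ x) * ext12 k B W.Δ (W.Δ xi * T.Θ * (x ⊗ₜ[k] x))
      = leg23 k B (W.Δ xi * T.Θ * (x ⊗ₜ[k] x)) * leg12 k B ((xi ⊗ₜ[k] xi) * T.Θbar * W.Δ x) := by
  simp only [leg12_mul, leg23_mul, ext12_mul, ext23_mul]
  rw [ext23_tmul_eq_mul_leg23 W xi xi, ext12_tmul_eq_leg12_mul W x x]
  simp only [mul_assoc]
  rw [W.coassoc xi, ← mul_assoc (ext23 k B W.Δ (W.Δ x)), ← ext23_mul,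
    comul_mul_comul_eq_comul_one hx, ← mul_assoc (ext23 k B W.Δ T.Θbar), ← ext23_mul,
    ← T.idem_right, ← mul_assoc (ext23 k B W.Δ T.Θbar), T.cocycle₄, mul_assoc,
    (commute_tmul_one_leg23 xi (W.Δ xi)).left_comm, (commute_tmul_one_leg23 xi T.Θ).left_comm,
    (commute_one_tmul_one_tmul_leg12 x (W.Δ x)).eq.symm,
    ← (commute_one_tmul_one_tmul_leg12 x T.Θbar).left_comm, ← mul_assoc (xi ⊗ₜ[k] (1 : B ⊗[k] B)),
    ← mul_assoc (leg23 k B (x ⊗ₜ[k] x))]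
  congr 3
  simp [Algebra.TensorProduct.tmul_mul_tmul, hx]

def Twist.gauge (x xi : B) (hx₁ : x * xi = 1) (hx₂ : xi * x = 1) (hεt : W.εt x = 1)
    (hεs : W.εs xi = 1) : Twist k B W where
  Θ := W.Δ xi * T.Θ * (x ⊗ₜ[k] x)
  Θbar := (xi ⊗ₜ[k] xi) * T.Θbar * W.Δ x
  idem_left := by rw [← mul_assoc, ← mul_assoc, comul_one_mul]
  idem_right := by rw [mul_assoc _ (W.Δ x), comul_mul_comul_one]
  prod_eq := gauge_prod_eq T hx₁ hx₂
  counit₁ := gauge_counit₁ T hx₂ hεt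
  counit₂ := gauge_counit₂ T hx₂ hεt
  counit₃ := gauge_counit₃ T hx₂ hεs
  counit₄ := gauge_counit₄ T hx₂ hεs
  cocycle₁ := gauge_cocycle₁ T (comul_mul_comul_eq_comul_one hx₁)
  cocycle₂ := gauge_cocycle₂ T (comul_mul_comul_eq_comul_one hx₁)
  cocycle₃ := gauge_cocycle₃ T hx₁
  cocycle₄ := gauge_cocycle₄ T hx₁

lemma map_conj_twistedComul (hx : x * xi = 1) (h : B) :
    TensorProduct.map (conj k xi x) (conj k xi x) (T.Θbar * W.Δ h * T.Θ)
      = (xi ⊗ₜ[k] xi) * T.Θbar * W.Δ x * W.Δ (xi * h * x) * (W.Δ xi * T.Θ * (x ⊗ₜ[k] x)) := by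
  rw [map_conj_conj, W.comul_mul, W.comul_mul]
  simp only [mul_assoc]
  rw [← mul_assoc (W.Δ x), comul_mul_comul_eq_comul_one hx, ← mul_assoc (W.Δ 1), comul_one_mul,
    ← mul_assoc (W.Δ x), comul_mul_comul_eq_comul_one hx, ← mul_assoc (W.Δ 1), ← T.idem_left]

lemma counit_conj (hεt : W.εt x = 1) (hεs : W.εs xi = 1) (h : B) : W.ε (xi * h * x) = W.ε h := by
  rw [counit_mul_eq_of_εt_eq_one W hεt, counit_mul_eq_of_εs_eq_one W hεs]

lemma conj_twistedAntipode (Θ Θbar : B ⊗[k] B) (hx : x * xi = 1) (hεt : W.εt x = 1)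
    (hεs : W.εs xi = 1) (h : B) :
    xi * (mul2 k B (TensorProduct.map LinearMap.id W.S Θbar) * W.S h
        * mul2 k B (TensorProduct.map W.S LinearMap.id Θ)) * x
      = mul2 k B (TensorProduct.map LinearMap.id W.S ((xi ⊗ₜ[k] xi) * Θbar * W.Δ x))
        * W.S (xi * h * x)
        * mul2 k B (TensorProduct.map W.S LinearMap.id (W.Δ xi * Θ * (x ⊗ₜ[k] x))) := by
  have hS : ∀ t, W.S xi * (W.S x * t) = t := fun t => by
    rw [← mul_assoc, ← antipode_mul, hx, S_one, one_mul]
  rw [mul2_map_S_id_mul_tmul, mul2_map_S_id_comul_mul W hεs, mul_assoc (xi ⊗ₜ[k] xi),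
    mul2_map_id_S_tmul_mul, mul2_map_id_S_mul_comul W hεt, antipode_mul, antipode_mul]
  simp only [mul_assoc]
  rw [hS, hS]

end Gauge

end WHA

/-- a gauge transformation `x` (invertible, with `ε_t(x) = ε_s(x) = 1`)
turns a twist `(Θ, Θ̄)` into a twist `(Θˣ, Θ̄ˣ)`, and `h ↦ x⁻¹hx` is an isomorphism
of weak Hopf algebras `H_Θ → H_{Θˣ}`. -/
theorem gauge_equivalence
    (k B : Type*) [Field k] [Ring B] [Algebra k B]
    (W : WHA.WeakHopf k B) (T : WHA.Twist k B W)
    (x xi : B) (hx₁ : x * xi = 1) (hx₂ : xi * x = 1)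
    (hεt : W.εt x = 1) (hεs : W.εs x = 1)
    (Θx Θbx : B ⊗[k] B)
    (hΘx : Θx = W.Δ xi * T.Θ * (x ⊗ₜ[k] x))
    (hΘbx : Θbx = (xi ⊗ₜ[k] xi) * T.Θbar * W.Δ x)
    (v vinv vx vxinv : B)
    (hv : v = WHA.mul2 k B (TensorProduct.map W.S LinearMap.id T.Θ))
    (hvinv : vinv = WHA.mul2 k B (TensorProduct.map LinearMap.id W.S T.Θbar))
    (hvx : vx = WHA.mul2 k B (TensorProduct.map W.S LinearMap.id Θx))
    (hvxinv : vxinv = WHA.mul2 k B (TensorProduct.map LinearMap.id W.S Θbx)) :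
    (∃ T' : WHA.Twist k B W, T'.Θ = Θx ∧ T'.Θbar = Θbx) ∧
    Function.Bijective (fun h : B => xi * h * x) ∧
    (∀ a b : B, xi * (a * b) * x = (xi * a * x) * (xi * b * x)) ∧
    (∀ h : B,
      TensorProduct.map (WHA.conj k xi x) (WHA.conj k xi x) (T.Θbar * W.Δ h * T.Θ)
        = Θbx * W.Δ (xi * h * x) * Θx) ∧
    (∀ h : B, W.ε (xi * h * x) = W.ε h) ∧
    (∀ h : B, xi * (vinv * W.S h * v) * x = vxinv * W.S (xi * h * x) * vx) := by
  have hεs' : W.εs xi = 1 := WHA.εs_eq_one_of_mul_eq_one W hεs hx₁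
  let u : Bˣ := ⟨x, xi, hx₁, hx₂⟩
  subst hΘx hΘbx hv hvinv hvx hvxinv
  refine ⟨⟨T.gauge x xi hx₁ hx₂ hεt hεs', rfl, rfl⟩,
    (Units.mulRight_bijective u).comp (Units.mulLeft_bijective u⁻¹), fun a b => ?_,
    WHA.map_conj_twistedComul T hx₁, WHA.counit_conj hεt hεs',
    WHA.conj_twistedAntipode T.Θ T.Θbar hx₁ hεt hεs'⟩
  simp only [mul_assoc]
  rw [← mul_assoc x xi, hx₁, one_mul]
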